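/- arXiv:2306.00565 — 9 statements merged into one kernel-verified Lean document; each statement's English description precedes it below -/
import Mathlib

section
/- If f : ℝᵈ → ℝ satisfies that f - m·q is convex and L·q - f is convex (where q(x) = ‖x‖²/2 and 0 ≤ m < L), then f is differentiable on ℝᵈ. -/
open scoped RealInnerProductSpace

/-- Existence of a subgradient (as a continuous linear functional) for a convex
function on a finite-dimensional real normed space. -/
lemma exists_subgrad {E : Type*} [NormedAddCommGroup E] [NormedSpace ℝ E]
    [FiniteDimensional ℝ E] {g : E → ℝ} (hg : ConvexOn ℝ Set.univ g) (x₀ : E) :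
    ∃ ψ : E →L[ℝ] ℝ, ∀ y, g x₀ + ψ (y - x₀) ≤ g y := by
  have hcont : Continuous g := hg.locallyLipschitz.continuous
  set S : Set (E × ℝ) := {p | g p.1 < p.2} with hS
  have hSopen : IsOpen S := isOpen_lt (hcont.comp continuous_fst) continuous_snd
  have hSconv : Convex ℝ S := by
    intro p hp q hq a b ha hb hab
    simp only [hS, Set.mem_setOf_eq] at hp hq ⊢
    have h1 := hg.2 (Set.mem_univ p.1) (Set.mem_univ q.1) ha hb hab
    have h2 : a * g p.1 + b * g q.1 < a * p.2 + b * q.2 := by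
      rcases ha.eq_or_lt with h0 | h0
      · have hb1 : b = 1 := by linarith
        simp only [← h0, hb1]; linarith
      · have h3 : a * g p.1 < a * p.2 := mul_lt_mul_of_pos_left hp h0
        have h4 : b * g q.1 ≤ b * q.2 := mul_le_mul_of_nonneg_left hq.le hb
        linarith
    simp only [Prod.fst_add, Prod.smul_fst, Prod.snd_add, Prod.smul_snd, smul_eq_mul]
    calc g (a • p.1 + b • q.1) ≤ a • g p.1 + b • g q.1 := h1
      _ < a * p.2 + b * q.2 := by simpa using h2
  have hx : (x₀, g x₀) ∉ S := by simp [hS]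
  obtain ⟨φ, hφ⟩ := geometric_hahn_banach_point_open hSconv hSopen hx
  set c : ℝ := φ (0, 1) with hcdef
  have hc : 0 < c := by
    have h1 := hφ (x₀, g x₀ + 1) (by simp [hS])
    have h2 : ((x₀, g x₀ + 1) : E × ℝ) = (x₀, g x₀) + (0, 1) := by
      simp [Prod.ext_iff]
    rw [h2, map_add] at h1
    linarith
  set ψ₀ : E →L[ℝ] ℝ := φ.comp (ContinuousLinearMap.inl ℝ E ℝ) with hψ₀
  have hdecomp : ∀ (x : E) (t : ℝ), φ (x, t) = ψ₀ x + t * c := by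
    intro x t
    have h1 : ((x, t) : E × ℝ) = (x, (0 : ℝ)) + t • ((0 : E), (1 : ℝ)) := by
      simp [Prod.ext_iff]
    rw [h1, map_add, map_smul]
    simp [hψ₀, hcdef, smul_eq_mul]
  have key : ∀ y, g x₀ * c + (ψ₀ x₀ - ψ₀ y) ≤ g y * c := by
    intro y
    by_contra h
    push_neg at h
    set t : ℝ := (g x₀ * c + (ψ₀ x₀ - ψ₀ y)) / c with ht
    have hgy : g y < t := by
      rw [ht, lt_div_iff₀ hc]; linarith
    have h2 := hφ (y, t) hgy
    rw [hdecomp y t, hdecomp x₀ (g x₀), ht, div_mul_cancel₀ _ hc.ne'] at h2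
    linarith
  refine ⟨(-(1 / c)) • ψ₀, fun y => ?_⟩
  have h3 := key y
  have h4 : ((-(1 / c)) • ψ₀) (y - x₀) = (ψ₀ x₀ - ψ₀ y) / c := by
    simp only [ContinuousLinearMap.smul_apply, map_sub, smul_eq_mul]
    field_simp
    ring
  rw [h4]
  have h5 : (ψ₀ x₀ - ψ₀ y) / c ≤ g y - g x₀ := by
    rw [div_le_iff₀ hc, sub_mul]
    linarith
  linarith

set_option maxHeartbeats 1000000 in
theorem smooth_strongly_convex_differentiable
    (d : ℕ) (m L : ℝ) (hm : 0 ≤ m) (hmL : m < L)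
    (f : EuclideanSpace ℝ (Fin d) → ℝ)
    (hfm : ConvexOn ℝ Set.univ (fun x => f x - m * (‖x‖ ^ 2 / 2)))
    (hfL : ConvexOn ℝ Set.univ (fun x => L * (‖x‖ ^ 2 / 2) - f x)) :
    Differentiable ℝ f := by
  have hL : 0 < L := lt_of_le_of_lt hm hmL
  have qid : ∀ x v : EuclideanSpace ℝ (Fin d),
      ‖x + v‖ ^ 2 / 2 = ‖x‖ ^ 2 / 2 + ⟪x, v⟫ + ‖v‖ ^ 2 / 2 := by
    intro x v
    have := norm_add_sq_real x v
    linarith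
  intro x₀
  obtain ⟨A, hA⟩ := exists_subgrad hfL x₀
  obtain ⟨B, hB⟩ := exists_subgrad hfm x₀
  set φ : EuclideanSpace ℝ (Fin d) →L[ℝ] ℝ := B + m • (innerSL ℝ x₀) with hφdef
  set φ' : EuclideanSpace ℝ (Fin d) →L[ℝ] ℝ := L • (innerSL ℝ x₀) - A with hφ'def
  have hφapp : ∀ v, φ v = B v + m * ⟪x₀, v⟫ := by
    intro v
    simp only [hφdef, ContinuousLinearMap.add_apply, ContinuousLinearMap.smul_apply,
      innerSL_apply_apply, smul_eq_mul]
  have hφ'app : ∀ v, φ' v = L * ⟪x₀, v⟫ - A v := by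
    intro v
    simp only [hφ'def, ContinuousLinearMap.sub_apply, ContinuousLinearMap.smul_apply,
      innerSL_apply_apply, smul_eq_mul]
  have lower : ∀ v, f x₀ + φ v + m * (‖v‖ ^ 2 / 2) ≤ f (x₀ + v) := by
    intro v
    have h1 := hB (x₀ + v)
    simp only [add_sub_cancel_left] at h1
    rw [qid x₀ v] at h1
    rw [hφapp v]
    linarith
  have upper : ∀ v, f (x₀ + v) ≤ f x₀ + φ' v + L * (‖v‖ ^ 2 / 2) := by
    intro v
    have h1 := hA (x₀ + v)
    simp only [add_sub_cancel_left] at h1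
    rw [qid x₀ v] at h1
    rw [hφ'app v]
    linarith
  have hle : ∀ v, φ v ≤ φ' v := by
    intro v
    by_contra h
    push_neg at h
    set δ : ℝ := φ v - φ' v with hδ
    have hδpos : 0 < δ := by linarith
    have hv0 : v ≠ 0 := by
      rintro rfl
      simp only [map_zero] at h
      exact lt_irrefl 0 h
    have hvn : 0 < ‖v‖ := norm_pos_iff.2 hv0
    have hLm : 0 < L - m := by linarith
    set t : ℝ := δ / ((L - m) * ‖v‖ ^ 2) with htdef
    have hden : 0 < (L - m) * ‖v‖ ^ 2 := by positivity
    have ht : 0 < t := div_pos hδpos hden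
    have h1 := lower (t • v)
    have h2 := upper (t • v)
    rw [map_smul, smul_eq_mul] at h1 h2
    have hn : ‖t • v‖ ^ 2 = t ^ 2 * ‖v‖ ^ 2 := by
      rw [norm_smul, mul_pow]
      simp [abs_of_pos ht]
    rw [hn] at h1 h2
    have h3 : t * δ ≤ (L - m) * (t ^ 2 * ‖v‖ ^ 2) / 2 := by
      have heq1 : t * φ v - t * φ' v = t * δ := by rw [hδ]; ring
      nlinarith
    have h4 : (L - m) * (t * ‖v‖ ^ 2) = δ := by
      rw [htdef]
      field_simp
    have h5 : (L - m) * (t ^ 2 * ‖v‖ ^ 2) = t * δ := by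
      rw [← h4]; ring
    rw [h5] at h3
    nlinarith
  have heq : ∀ v, φ v = φ' v := by
    intro v
    refine le_antisymm (hle v) ?_
    have := hle (-v)
    simp only [map_neg] at this
    linarith
  have hderiv : HasFDerivAt f φ x₀ := by
    rw [hasFDerivAt_iff_isLittleO_nhds_zero, Asymptotics.isLittleO_iff]
    intro c hc
    have hrpos : 0 < 2 * c / L := by positivity
    filter_upwards [Metric.ball_mem_nhds (0 : EuclideanSpace ℝ (Fin d)) hrpos] with v hv
    rw [Metric.mem_ball, dist_zero_right] at hv
    have h1 := lower v
    have h2 := upper v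
    rw [← heq v] at h2
    have h3 : 0 ≤ f (x₀ + v) - f x₀ - φ v := by nlinarith [norm_nonneg v]
    have h4 : f (x₀ + v) - f x₀ - φ v ≤ L * (‖v‖ ^ 2 / 2) := by linarith
    rw [Real.norm_eq_abs, abs_of_nonneg h3]
    have h5 : ‖v‖ * L ≤ 2 * c := ((lt_div_iff₀ hL).mp hv).le
    nlinarith [mul_le_mul_of_nonneg_right h5 (norm_nonneg v), sq_nonneg ‖v‖]
  exact hderiv.differentiableAt
end

section
/- For f in the class S_{m,L} (i.e., f - m·q and L·q - f are convex, with q(x)=‖x‖²/2, 0 ≤ m < L), the function V(x) := (L-m)·f_m(x) - q(∇f_m(x)) satisfies V(u) - V(y) ≤ ⟨∇f_m(u), ∇f^L(u) - ∇f^L(y)⟩ for all u, y ∈ ℝᵈ, where f_m = f - m·q and f^L = L·q - f. -/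
/-!
Write `M = L - m` and `g = f_m`, so that `f^L = M q - g` and `∇f^L = M • id - ∇g`. After expanding
the inner product, the claim is `M` times the co-coercivity bound
`‖∇g y - ∇g u‖² / (2M) ≤ g y - g u - ⟪∇g u, y - u⟫`. This follows by evaluating the affine minorant
of `g` at `u` and the quadratic majorant of `g` at `y` (convexity of `M q - g`) at the point
`y - (∇g y - ∇g u) / M`, which minimises the gap between the two bounds.
-/

open Set
open scoped RealInnerProductSpace Gradient

theorem ConvexOn.add_fderiv_le {F : Type*} [NormedAddCommGroup F] [NormedSpace ℝ F]
    {s : Set F} {g : F → ℝ} {g' : F →L[ℝ] ℝ} {x y : F} (hg : ConvexOn ℝ s g)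
    (hx : x ∈ s) (hy : y ∈ s) (hd : HasFDerivAt g g' x) : g x + g' (y - x) ≤ g y := by
  set ℓ : ℝ →ᵃ[ℝ] F := AffineMap.lineMap x y
  have hd0 : HasDerivAt (g ∘ ℓ) (g' (y - x)) 0 :=
    (by simpa [ℓ] using hd : HasFDerivAt g g' (ℓ 0)).comp_hasDerivAt 0
      AffineMap.hasDerivAt_lineMap
  have hslope := (hg.comp_affineMap ℓ).le_slope_of_hasDerivAt (x := 0) (y := 1)
    (by simpa [ℓ] using hx) (by simpa [ℓ] using hy) zero_lt_one hd0
  simp only [slope_def_field, Function.comp_apply, ℓ, AffineMap.lineMap_apply_zero,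
    AffineMap.lineMap_apply_one, sub_zero, div_one] at hslope
  linarith

variable {E : Type*} [NormedAddCommGroup E] [InnerProductSpace ℝ E] [CompleteSpace E]

theorem hasGradientAt_half_norm_sq (x : E) : HasGradientAt (fun y : E => ‖y‖ ^ 2 / 2) x x := by
  have h := (hasStrictFDerivAt_norm_sq x).hasFDerivAt.const_smul (1 / 2 : ℝ)
  rw [hasGradientAt_iff_hasFDerivAt]
  convert! h using 1
  · funext y; simp only [Pi.smul_apply, smul_eq_mul]; ring
  · ext v; simp

theorem HasGradientAt.sub {f g : E → ℝ} {f' g' x : E} (hf : HasGradientAt f f' x)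
    (hg : HasGradientAt g g' x) : HasGradientAt (fun y => f y - g y) (f' - g') x := by
  rw [hasGradientAt_iff_hasFDerivAt, map_sub]
  exact hf.hasFDerivAt.sub hg.hasFDerivAt

theorem HasGradientAt.const_mul {f : E → ℝ} {f' x : E} (c : ℝ) (hf : HasGradientAt f f' x) :
    HasGradientAt (fun y => c * f y) (c • f') x := by
  rw [hasGradientAt_iff_hasFDerivAt, map_smul]
  exact hf.hasFDerivAt.const_mul c

theorem ConvexOn.add_inner_gradient_le {s : Set E} {g : E → ℝ} {g' x y : E}
    (hg : ConvexOn ℝ s g) (hx : x ∈ s) (hy : y ∈ s) (hd : HasGradientAt g g' x) :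
    g x + ⟪g', y - x⟫ ≤ g y := by
  simpa using hg.add_fderiv_le hx hy hd.hasFDerivAt

section
variable {g : E → ℝ} {M : ℝ}

theorem hasGradientAt_mul_half_norm_sq_sub {x : E} (hg : DifferentiableAt ℝ g x) :
    HasGradientAt (fun y => M * (‖y‖ ^ 2 / 2) - g y) (M • x - ∇ g x) x :=
  ((hasGradientAt_half_norm_sq x).const_mul M).sub hg.hasGradientAt

theorem le_add_inner_gradient_add_norm_sq_of_convexOn {s : Set E} {x y : E}
    (hconv : ConvexOn ℝ s fun x => M * (‖x‖ ^ 2 / 2) - g x) (hx : x ∈ s) (hy : y ∈ s)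
    (hg : DifferentiableAt ℝ g x) :
    g y ≤ g x + ⟪∇ g x, y - x⟫ + M * (‖y - x‖ ^ 2 / 2) := by
  have h := hconv.add_inner_gradient_le hx hy (hasGradientAt_mul_half_norm_sq_sub hg)
  have hnorm : ‖y‖ ^ 2 = ‖x‖ ^ 2 + 2 * ⟪x, y - x⟫ + ‖y - x‖ ^ 2 := by
    rw [← norm_add_sq_real, add_sub_cancel]
  rw [inner_sub_left, inner_smul_left, hnorm] at h
  simp only [conj_trivial] at h
  linarith

theorem ConvexOn.norm_gradient_sub_sq_le (hM : 0 < M) (hconv : ConvexOn ℝ univ g)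
    (hconv' : ConvexOn ℝ univ fun x => M * (‖x‖ ^ 2 / 2) - g x) {u y : E}
    (hu : DifferentiableAt ℝ g u) (hy : DifferentiableAt ℝ g y) :
    ‖∇ g y - ∇ g u‖ ^ 2 / 2 ≤ M * (g y - g u - ⟪∇ g u, y - u⟫) := by
  set w := ∇ g y - ∇ g u
  set p := y - M⁻¹ • w
  have lower := hconv.add_inner_gradient_le trivial trivial hu.hasGradientAt (y := p)
  have upper := le_add_inner_gradient_add_norm_sq_of_convexOn (y := p) hconv' trivial trivial hy
  have hpu : p - u = (y - u) - M⁻¹ • w := sub_right_comm _ _ _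
  have hpy : p - y = -(M⁻¹ • w) := sub_sub_cancel_left _ _
  have hw : M⁻¹ * ⟪∇ g y, w⟫ - M⁻¹ * ⟪∇ g u, w⟫ = M⁻¹ * ‖w‖ ^ 2 := by
    rw [← mul_sub, ← inner_sub_left, real_inner_self_eq_norm_sq]
  rw [hpu, inner_sub_right, inner_smul_right] at lower
  rw [hpy, inner_neg_right, inner_smul_right, norm_neg, norm_smul, mul_pow, Real.norm_eq_abs,
    sq_abs] at upper
  have key : M⁻¹ * (‖w‖ ^ 2 / 2) ≤ g y - g u - ⟪∇ g u, y - u⟫ := by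
    have : M * (M⁻¹ ^ 2 * ‖w‖ ^ 2 / 2) = M⁻¹ * (‖w‖ ^ 2 / 2) := by field_simp
    linarith
  calc ‖w‖ ^ 2 / 2 = M * (M⁻¹ * (‖w‖ ^ 2 / 2)) := by field_simp
    _ ≤ _ := by gcongr
end

theorem lyapunov_gradient_inequality_general
    (d : ℕ) (m L : ℝ) (hmL : m < L)
    (f : EuclideanSpace ℝ (Fin d) → ℝ) (hf : Differentiable ℝ f)
    (fm fL : EuclideanSpace ℝ (Fin d) → ℝ)
    (hfm_def : fm = fun x => f x - m * (‖x‖ ^ 2 / 2))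
    (hfL_def : fL = fun x => L * (‖x‖ ^ 2 / 2) - f x)
    (hfm : ConvexOn ℝ Set.univ fm) (hfL : ConvexOn ℝ Set.univ fL)
    (V : EuclideanSpace ℝ (Fin d) → ℝ)
    (hV : V = fun x => (L - m) * fm x - ‖gradient fm x‖ ^ 2 / 2) :
    ∀ u y, V u - V y ≤ ⟪gradient fm u, gradient fL u - gradient fL y⟫ := by
  intro u y
  have hfm_diff : Differentiable ℝ fm := fun x => by
    rw [hfm_def]
    exact ((hf x).hasGradientAt.sub ((hasGradientAt_half_norm_sq x).const_mul m)).differentiableAt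
  have hfL_eq : fL = fun x => (L - m) * (‖x‖ ^ 2 / 2) - fm x := by
    funext x; rw [hfL_def, hfm_def]; ring
  have hgrad_fL (x) : ∇ fL x = (L - m) • x - ∇ fm x := by
    rw [hfL_eq]; exact (hasGradientAt_mul_half_norm_sq_sub (hfm_diff x)).gradient
  have key := hfm.norm_gradient_sub_sq_le (sub_pos.2 hmL) (hfL_eq ▸ hfL) (hfm_diff u) (hfm_diff y)
  rw [norm_sub_sq_real, inner_sub_right] at key
  simp only [hV, hgrad_fL, inner_sub_right, inner_smul_right, real_inner_self_eq_norm_sq]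
  rw [real_inner_comm] at key
  linear_combination key

theorem lyapunov_gradient_inequality
    (d : ℕ) (m L : ℝ) (hm : 0 ≤ m) (hmL : m < L)
    (f : EuclideanSpace ℝ (Fin d) → ℝ) (hf : Differentiable ℝ f)
    (fm fL : EuclideanSpace ℝ (Fin d) → ℝ)
    (hfm_def : fm = fun x => f x - m * (‖x‖ ^ 2 / 2))
    (hfL_def : fL = fun x => L * (‖x‖ ^ 2 / 2) - f x)
    (hfm : ConvexOn ℝ Set.univ fm) (hfL : ConvexOn ℝ Set.univ fL)
    (V : EuclideanSpace ℝ (Fin d) → ℝ)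
    (hV : V = fun x => (L - m) * fm x - ‖gradient fm x‖ ^ 2 / 2) :
    ∀ u y, V u - V y ≤ ⟪gradient fm u, gradient fL u - gradient fL y⟫ :=
  lyapunov_gradient_inequality_general d m L hmL f hf fm fL hfm_def hfL_def hfm hfL V hV
end

section
/- If f ∈ S_{m,L} with f(0) = 0 and ∇f(0) = 0, then the function V(x) := (L-m)·f_m(x) - ‖∇f_m(x)‖²/2 is nonnegative everywhere and V(0) = 0, i.e., V has a global minimum at 0 with value 0. -/
/-!
With `ℓ := L - m` we have `f^L = ℓ q - f_m`, so `f_m` is convex and `ℓ`-smooth, and its zero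
gradient at `0` makes `0 = f_m 0` its minimum. The gradient step `y := x - ℓ⁻¹ ∇f_m(x)` decreases
`f_m` by at least `‖∇f_m(x)‖² / (2ℓ)` (descent lemma), and `f_m y ≥ 0` gives `V x ≥ 0`.
-/

open Set InnerProductSpace

theorem ConvexOn.add_le_of_hasFDerivAt {E : Type*} [NormedAddCommGroup E] [NormedSpace ℝ E]
    {g : E → ℝ} {g' : E →L[ℝ] ℝ} {x : E} (hg : ConvexOn ℝ univ g) (hg' : HasFDerivAt g g' x)
    (y : E) : g x + g' (y - x) ≤ g y := by
  let line : ℝ →ᵃ[ℝ] E := AffineMap.lineMap x y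
  have hline : ConvexOn ℝ univ (g ∘ line) := by simpa using hg.comp_affineMap line
  have hderiv : HasDerivAt (g ∘ line) (g' (y - x)) 0 :=
    (by simpa [line] using hg' : HasFDerivAt g g' (line 0)).comp_hasDerivAt 0
      AffineMap.hasDerivAt_lineMap
  have hslope := hline.le_slope_of_hasDerivAt (mem_univ 0) (mem_univ 1) zero_lt_one hderiv
  simp only [slope_def_field, Function.comp_apply, line, AffineMap.lineMap_apply_zero,
    AffineMap.lineMap_apply_one, sub_zero, div_one] at hslope
  linarith

section InnerProductSpace

variable {E : Type*} [NormedAddCommGroup E] [InnerProductSpace ℝ E]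

theorem hasFDerivAt_half_norm_sq (x : E) :
    HasFDerivAt (fun y : E => ‖y‖ ^ 2 / 2) (innerSL ℝ x) x := by
  have h := (hasStrictFDerivAt_norm_sq x).hasFDerivAt.const_mul (1 / 2 : ℝ)
  refine (h.congr_fderiv ?_).congr_of_eventuallyEq (.of_eq (funext fun y => by ring))
  ext v
  simp

theorem le_add_add_half_mul_norm_sq_of_convexOn_sub {g : E → ℝ} {g' : E →L[ℝ] ℝ} {x : E} {ℓ : ℝ}
    (hsmooth : ConvexOn ℝ univ fun y => ℓ * (‖y‖ ^ 2 / 2) - g y) (hg' : HasFDerivAt g g' x)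
    (y : E) : g y ≤ g x + g' (y - x) + ℓ * (‖y - x‖ ^ 2 / 2) := by
  have := hsmooth.add_le_of_hasFDerivAt (((hasFDerivAt_half_norm_sq x).const_mul ℓ).sub hg') y
  simp only [FunLike.coe_sub, FunLike.coe_smul, Pi.sub_apply, Pi.smul_apply, innerSL_apply_apply,
    smul_eq_mul, inner_sub_right, real_inner_self_eq_norm_sq] at this
  rw [norm_sub_sq_real, real_inner_comm]
  linear_combination this

theorem sq_norm_gradient_div_two_le [CompleteSpace E] {g : E → ℝ} {ℓ : ℝ} {x : E} (hℓ : 0 < ℓ)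
    (hg : DifferentiableAt ℝ g x) (hg_nonneg : ∀ y, 0 ≤ g y) (hsmooth : ConvexOn ℝ univ fun y => ℓ * (‖y‖ ^ 2 / 2) - g y) :
    ‖gradient g x‖ ^ 2 / 2 ≤ ℓ * g x := by
  set G := gradient g x
  have hG : HasFDerivAt g (toDual ℝ E G) x := hasGradientAt_iff_hasFDerivAt.mp hg.hasGradientAt
  have hstep := le_add_add_half_mul_norm_sq_of_convexOn_sub hsmooth hG (x - ℓ⁻¹ • G)
  simp only [sub_sub_cancel_left, toDual_apply_apply, inner_neg_right, real_inner_smul_right,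
    real_inner_self_eq_norm_sq, norm_neg, norm_smul, Real.norm_eq_abs, abs_inv,
    abs_of_pos hℓ] at hstep
  have hdescent : ℓ⁻¹ * (‖G‖ ^ 2 / 2) ≤ g x := by
    have hinv : ℓ * ℓ⁻¹ = 1 := mul_inv_cancel₀ hℓ.ne'
    linear_combination hstep + hg_nonneg (x - ℓ⁻¹ • G) + ℓ⁻¹ * (‖G‖ ^ 2 / 2) * hinv
  rwa [inv_mul_le_iff₀ hℓ] at hdescent

end InnerProductSpace

theorem lyapunov_nonneg_general
    (d : ℕ) (m L : ℝ) (hmL : m < L)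
    (f : EuclideanSpace ℝ (Fin d) → ℝ) (hf : Differentiable ℝ f)
    (fm fL : EuclideanSpace ℝ (Fin d) → ℝ)
    (hfm_def : fm = fun x => f x - m * (‖x‖ ^ 2 / 2))
    (hfL_def : fL = fun x => L * (‖x‖ ^ 2 / 2) - f x)
    (hfm : ConvexOn ℝ Set.univ fm) (hfL : ConvexOn ℝ Set.univ fL)
    (hf0 : f 0 = 0) (hgrad0 : gradient f 0 = 0)
    (V : EuclideanSpace ℝ (Fin d) → ℝ)
    (hV : V = fun x => (L - m) * fm x - ‖gradient fm x‖ ^ 2 / 2) :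
    V 0 = 0 ∧ ∀ x, 0 ≤ V x := by
  have hfm' (x : EuclideanSpace ℝ (Fin d)) : HasFDerivAt fm (fderiv ℝ f x - m • innerSL ℝ x) x :=
    hfm_def ▸ (hf x).hasFDerivAt.sub ((hasFDerivAt_half_norm_sq x).const_mul m)
  have hfm'_zero : HasFDerivAt fm (0 : EuclideanSpace ℝ (Fin d) →L[ℝ] ℝ) 0 := by
    simpa [← toDual_gradient, hgrad0] using hfm' 0
  have hfm_zero : fm 0 = 0 := by simp [hfm_def, hf0]
  have hgrad_fm_zero : gradient fm 0 = 0 :=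
    (hasGradientAt_iff_hasFDerivAt.mpr (by simpa using hfm'_zero)).gradient
  have hfm_nonneg (y : EuclideanSpace ℝ (Fin d)) : 0 ≤ fm y := by
    simpa [hfm_zero] using hfm.add_le_of_hasFDerivAt hfm'_zero y
  have hfL_eq : fL = fun x => (L - m) * (‖x‖ ^ 2 / 2) - fm x := by
    funext x; simp only [hfL_def, hfm_def]; ring
  subst hV
  refine ⟨by simp [hfm_zero, hgrad_fm_zero], fun x => ?_⟩
  have := sq_norm_gradient_div_two_le (sub_pos.mpr hmL) (hfm' x).differentiableAt hfm_nonneg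
    (hfL_eq ▸ hfL)
  linarith

theorem lyapunov_nonneg
    (d : ℕ) (m L : ℝ) (hm : 0 ≤ m) (hmL : m < L)
    (f : EuclideanSpace ℝ (Fin d) → ℝ) (hf : Differentiable ℝ f)
    (fm fL : EuclideanSpace ℝ (Fin d) → ℝ)
    (hfm_def : fm = fun x => f x - m * (‖x‖ ^ 2 / 2))
    (hfL_def : fL = fun x => L * (‖x‖ ^ 2 / 2) - f x)
    (hfm : ConvexOn ℝ Set.univ fm) (hfL : ConvexOn ℝ Set.univ fL)
    (hf0 : f 0 = 0) (hgrad0 : gradient f 0 = 0)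
    (V : EuclideanSpace ℝ (Fin d) → ℝ)
    (hV : V = fun x => (L - m) * fm x - ‖gradient fm x‖ ^ 2 / 2) :
    V 0 = 0 ∧ ∀ x, 0 ≤ V x :=
  lyapunov_nonneg_general d m L hmL f hf fm fL hfm_def hfL_def hfm hfL hf0 hgrad0 V hV
end

section
/- Let ρ ∈ (0,1] and λ : ℕ → ℝ satisfy λ_ν ≤ 0 for all ν ≥ 1 and ∑_{ν=0}^∞ ρ^{-ν} λ_ν > 0 (with the series absolutely convergent). Suppose (p_t), (q_t) are sequences in ℝᵈ such that for all T ≥ 1 and all ν ≥ 1: ∑_{t=0}^{T-1} ⟨q_t, p_t⟩ ≥ 0 and ∑_{t=0}^{T-1} ⟨q_t, p_t - ρ^ν p_{t-ν}⟩ ≥ 0 (with p_s := 0 for s < 0). Then the filtered signal r_t := ∑_{ν=0}^{t} λ_ν p_{t-ν} satisfies ∑_{t=0}^{T-1} ⟨q_t, r_t⟩ ≥ 0 for all T ≥ 1. -/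
/-!
Exchanging the order of summation gives `∑_t ⟪q_t, r_t⟫ = ∑_{ν<T} λ_ν X_ν` with
`X_ν = ∑_{t<T} ⟪q_t, p_{t-ν}⟫`. The hypotheses say `X_0 ≥ 0` and `ρ^ν X_ν ≤ X_0`, so for `ν ≥ 1`,
where `λ_ν ≤ 0`, we get `λ_ν X_ν ≥ ρ^{-ν} λ_ν X_0`. Summing, the total is at least
`(∑_{ν<T} ρ^{-ν} λ_ν) X_0`, and this partial sum is positive because it dominates the full series,
whose tail is nonpositive.
-/

open Finset
open scoped RealInnerProductSpace

def delay {E : Type*} [Zero E] (ν : ℕ) (p : ℕ → E) (t : ℕ) : E :=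
  if ν ≤ t then p (t - ν) else 0

lemma delay_zero {E : Type*} [Zero E] (p : ℕ → E) : delay 0 p = p := by
  ext t
  simp [delay]

lemma tsum_le_sum_range_of_nonpos {f : ℕ → ℝ} (hf : Summable f) {T : ℕ}
    (h : ∀ ν, T ≤ ν → f ν ≤ 0) : ∑' ν, f ν ≤ ∑ ν ∈ range T, f ν := by
  rw [← hf.sum_add_tsum_nat_add T]
  exact add_le_of_nonpos_right (tsum_nonpos fun ν => h _ (Nat.le_add_left T ν))

section InnerProductSpace

variable {E : Type*} [NormedAddCommGroup E] [InnerProductSpace ℝ E]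

lemma sum_range_smul_delay (c : ℕ → ℝ) (p : ℕ → E) {t T : ℕ} (ht : t < T) :
    ∑ ν ∈ range T, c ν • delay ν p t = ∑ ν ∈ range (t + 1), c ν • p (t - ν) := by
  rw [← sum_subset (range_subset_range.mpr ht)]
  · refine sum_congr rfl fun ν hν => ?_
    simp [delay, Nat.lt_succ_iff.mp (mem_range.mp hν)]
  · intro ν _ hν
    have : ¬ν ≤ t := fun h => hν (mem_range.mpr (Nat.lt_succ_of_le h))
    simp [delay, this]

lemma sum_inner_causal_conv (c : ℕ → ℝ) (p q : ℕ → E) (T : ℕ) :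
    ∑ t ∈ range T, ⟪q t, ∑ ν ∈ range (t + 1), c ν • p (t - ν)⟫
      = ∑ ν ∈ range T, c ν * ∑ t ∈ range T, ⟪q t, delay ν p t⟫ := by
  calc ∑ t ∈ range T, ⟪q t, ∑ ν ∈ range (t + 1), c ν • p (t - ν)⟫
      = ∑ t ∈ range T, ∑ ν ∈ range T, c ν * ⟪q t, delay ν p t⟫ := by
        refine sum_congr rfl fun t ht => ?_
        rw [← sum_range_smul_delay c p (mem_range.mp ht), inner_sum]
        simp only [real_inner_smul_right]
    _ = ∑ ν ∈ range T, c ν * ∑ t ∈ range T, ⟪q t, delay ν p t⟫ := by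
        rw [sum_comm]
        simp only [mul_sum]

lemma sum_inner_sub_smul_delay (a : ℝ) (ν : ℕ) (p q : ℕ → E) (T : ℕ) :
    ∑ t ∈ range T, ⟪q t, p t - a • delay ν p t⟫
      = ∑ t ∈ range T, ⟪q t, p t⟫ - a * ∑ t ∈ range T, ⟪q t, delay ν p t⟫ := by
  simp only [inner_sub_right, real_inner_smul_right, sum_sub_distrib, mul_sum]

lemma inv_pow_mul_sum_inner_le {ρ a : ℝ} (hρ : 0 < ρ) (ha : a ≤ 0) (ν : ℕ) (p q : ℕ → E)
    (T : ℕ) (h : 0 ≤ ∑ t ∈ range T, ⟪q t, p t - ρ ^ ν • delay ν p t⟫) :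
    ρ⁻¹ ^ ν * a * ∑ t ∈ range T, ⟪q t, p t⟫ ≤ a * ∑ t ∈ range T, ⟪q t, delay ν p t⟫ := by
  rw [sum_inner_sub_smul_delay] at h
  have hρν : ρ⁻¹ ^ ν * ρ ^ ν = 1 := by
    rw [← mul_pow, inv_mul_cancel₀ hρ.ne', one_pow]
  calc ρ⁻¹ ^ ν * a * ∑ t ∈ range T, ⟪q t, p t⟫
      ≤ ρ⁻¹ ^ ν * a * (ρ ^ ν * ∑ t ∈ range T, ⟪q t, delay ν p t⟫) :=
        mul_le_mul_of_nonpos_left (by linarith)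
          (mul_nonpos_of_nonneg_of_nonpos (by positivity) ha)
    _ = a * ∑ t ∈ range T, ⟪q t, delay ν p t⟫ := by
        linear_combination (a * ∑ t ∈ range T, ⟪q t, delay ν p t⟫) * hρν

end InnerProductSpace

theorem filtered_dynamic_iqc_general
    (d : ℕ) (ρ : ℝ) (hρ0 : 0 < ρ)
    (lam : ℕ → ℝ) (hlam : ∀ ν : ℕ, 1 ≤ ν → lam ν ≤ 0)
    (hpos : 0 < ∑' ν : ℕ, ρ⁻¹ ^ ν * lam ν)
    (p q : ℕ → EuclideanSpace ℝ (Fin d))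
    (hp0 : ∀ T : ℕ, 1 ≤ T → 0 ≤ ∑ t ∈ Finset.range T, ⟪q t, p t⟫)
    (hpν : ∀ (T : ℕ), 1 ≤ T → ∀ ν : ℕ, 1 ≤ ν →
      0 ≤ ∑ t ∈ Finset.range T,
        ⟪q t, p t - ρ ^ ν • (if ν ≤ t then p (t - ν) else 0)⟫) :
    ∀ T : ℕ, 1 ≤ T →
      0 ≤ ∑ t ∈ Finset.range T,
        ⟪q t, ∑ ν ∈ Finset.range (t + 1), lam ν • p (t - ν)⟫ := by
  intro T hT
  have hsummable : Summable fun ν => ρ⁻¹ ^ ν * lam ν := by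
    by_contra h
    exact hpos.ne' (tsum_eq_zero_of_not_summable h)
  have hpartial : 0 < ∑ ν ∈ range T, ρ⁻¹ ^ ν * lam ν :=
    hpos.trans_le <| tsum_le_sum_range_of_nonpos hsummable fun ν hν =>
      mul_nonpos_of_nonneg_of_nonpos (by positivity) (hlam ν (hT.trans hν))
  rw [sum_inner_causal_conv]
  calc (0 : ℝ) ≤ (∑ ν ∈ range T, ρ⁻¹ ^ ν * lam ν) * ∑ t ∈ range T, ⟪q t, p t⟫ :=
        mul_nonneg hpartial.le (hp0 T hT)
    _ = ∑ ν ∈ range T, ρ⁻¹ ^ ν * lam ν * ∑ t ∈ range T, ⟪q t, p t⟫ := sum_mul ..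
    _ ≤ ∑ ν ∈ range T, lam ν * ∑ t ∈ range T, ⟪q t, delay ν p t⟫ := by
        refine sum_le_sum fun ν _ => ?_
        rcases Nat.eq_zero_or_pos ν with rfl | hν
        · simp [delay_zero]
        · exact inv_pow_mul_sum_inner_le hρ0 (hlam ν hν) ν p q T (hpν T hT ν hν)

theorem filtered_dynamic_iqc
    (d : ℕ) (ρ : ℝ) (hρ0 : 0 < ρ) (hρ1 : ρ ≤ 1)
    (lam : ℕ → ℝ) (hlam : ∀ ν : ℕ, 1 ≤ ν → lam ν ≤ 0)
    (hsum : Summable (fun ν : ℕ => ρ⁻¹ ^ ν * |lam ν|))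
    (hpos : 0 < ∑' ν : ℕ, ρ⁻¹ ^ ν * lam ν)
    (p q : ℕ → EuclideanSpace ℝ (Fin d))
    (hp0 : ∀ T : ℕ, 1 ≤ T → 0 ≤ ∑ t ∈ Finset.range T, ⟪q t, p t⟫)
    (hpν : ∀ (T : ℕ), 1 ≤ T → ∀ ν : ℕ, 1 ≤ ν →
      0 ≤ ∑ t ∈ Finset.range T,
        ⟪q t, p t - ρ ^ ν • (if ν ≤ t then p (t - ν) else 0)⟫) :
    ∀ T : ℕ, 1 ≤ T →
      0 ≤ ∑ t ∈ Finset.range T,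
        ⟪q t, ∑ ν ∈ Finset.range (t + 1), lam ν • p (t - ν)⟫ :=
  filtered_dynamic_iqc_general d ρ hρ0 lam hlam hpos p q hp0 hpν
end

section
/- Let A_f = C_α be the companion matrix of a monic real polynomial α(z) = α_0 + α_1 z + ⋯ + α_{l-1} z^{l-1} + z^l of degree l ≥ 1 with all coefficients α_0, …, α_{l-1} ≤ 0, and let B_f = e_l be the last standard unit vector. If C_f ∈ ℝ^{1×l} satisfies C_f·A_f^ν·B_f ≤ 0 for ν = 0, 1, …, l-1, then C_f·A_f^ν·B_f ≤ 0 for all ν ∈ ℕ. -/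
/-!
With `e₀, …, e_{l-1}` the standard basis and `b = e_{l-1}`, we have `A e₀ = -α₀ b` and
`A e_{j+1} = e_j - α_{j+1} b`. So `A^{j+1} e_j + ∑_{i ≤ j} α_i A^i b` vanishes for `j = 0` and does
not change with `j`; at `j = l - 1` this says `α(A) b = 0`. Hence the Markov parameters
`m_ν = C A^ν b` satisfy the linear recurrence `m_{ν+l} = ∑_j (-α_j) m_{ν+j}`, whose coefficients
are nonnegative, and nonpositivity of `m_0, …, m_{l-1}` propagates to all `m_ν` by strong induction.
-/

/-- Companion matrix of the monic polynomial `z^l + a_{l-1} z^{l-1} + ⋯ + a_0`: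
ones on the superdiagonal and last row `(-a_0, …, -a_{l-1})`. -/
def companionMatrix {l : ℕ} (a : Fin l → ℝ) : Matrix (Fin l) (Fin l) ℝ :=
  Matrix.of fun i j =>
    (if (i : ℕ) + 1 = (j : ℕ) then (1 : ℝ) else 0) +
    (if (i : ℕ) = l - 1 then -a j else 0)

/-- The last standard unit vector, as a column matrix. -/
def lastUnitCol (l : ℕ) : Matrix (Fin l) (Fin 1) ℝ :=
  Matrix.of fun i _ => if (i : ℕ) = l - 1 then (1 : ℝ) else 0

namespace LinearRecurrence

theorem IsSolution.nonpos {R : Type*} [CommSemiring R] [PartialOrder R] [IsOrderedRing R]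
    {E : LinearRecurrence R} {u : ℕ → R} (hu : E.IsSolution u) (hE : ∀ i, 0 ≤ E.coeffs i)
    (hinit : ∀ n < E.order, u n ≤ 0) (n : ℕ) : u n ≤ 0 := by
  induction n using Nat.strong_induction_on with
  | _ n ih =>
    rcases lt_or_ge n E.order with hn | hn
    · exact hinit n hn
    · obtain ⟨m, rfl⟩ := Nat.exists_eq_add_of_le' hn
      rw [hu m]
      exact Finset.sum_nonpos fun i _ => mul_nonpos_of_nonneg_of_nonpos (hE i) (ih _ (by omega))

theorem isSolution_mul_pow_mul {R m n o : Type*} [CommSemiring R] [Fintype n] [DecidableEq n]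
    (E : LinearRecurrence R) (M : Matrix n n R) (v : Matrix n o R)
    (hv : M ^ E.order * v = ∑ i, E.coeffs i • (M ^ (i : ℕ) * v)) (C : Matrix m n R) (p : m)
    (q : o) : E.IsSolution fun k => (C * M ^ k * v) p q := by
  intro k
  simp only [pow_add, Matrix.mul_assoc, hv, Matrix.mul_sum, Matrix.mul_smul, Matrix.sum_apply,
    Matrix.smul_apply, smul_eq_mul]

end LinearRecurrence

def stdCol (l j : ℕ) : Matrix (Fin l) (Fin 1) ℝ :=
  Matrix.of fun i _ => if (i : ℕ) = j then 1 else 0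

def extendedCoeff {l : ℕ} (a : Fin l → ℝ) (j : ℕ) : ℝ :=
  if h : j < l then a ⟨j, h⟩ else 0

section companionMatrix

variable {l : ℕ} (a : Fin l → ℝ)

theorem companionMatrix_mul_stdCol {j : ℕ} (hj : j < l) :
    companionMatrix a * stdCol l j = Matrix.of fun i _ => companionMatrix a i ⟨j, hj⟩ := by
  ext i k
  rw [Matrix.mul_apply, Finset.sum_eq_single ⟨j, hj⟩]
  · simp [stdCol]
  · intro b _ hb
    simp [stdCol, Fin.val_ne_of_ne hb]
  · simp

theorem companionMatrix_mul_stdCol_zero (hl : 0 < l) :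
    companionMatrix a * stdCol l 0 = -extendedCoeff a 0 • lastUnitCol l := by
  rw [companionMatrix_mul_stdCol a hl]
  ext i k
  simp [companionMatrix, lastUnitCol, extendedCoeff, hl]

theorem companionMatrix_mul_stdCol_succ {j : ℕ} (hj : j + 1 < l) :
    companionMatrix a * stdCol l (j + 1) =
      stdCol l j - extendedCoeff a (j + 1) • lastUnitCol l := by
  rw [companionMatrix_mul_stdCol a hj]
  ext i k
  simp only [companionMatrix, lastUnitCol, stdCol, extendedCoeff, hj, Matrix.of_apply,
    Matrix.sub_apply, Matrix.smul_apply, dif_pos, smul_eq_mul]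
  split_ifs <;> grind

theorem companionMatrix_pow_mul_stdCol_add_sum {j : ℕ} (hj : j < l) :
    companionMatrix a ^ (j + 1) * stdCol l j +
      ∑ i ∈ Finset.range (j + 1), extendedCoeff a i • (companionMatrix a ^ i * lastUnitCol l) =
      0 := by
  induction j with
  | zero => simp [companionMatrix_mul_stdCol_zero a hj]
  | succ j ih =>
    rw [Finset.sum_range_succ, pow_succ _ (j + 1), Matrix.mul_assoc,
      companionMatrix_mul_stdCol_succ a hj, Matrix.mul_sub, Matrix.mul_smul, ← ih (by omega)]
    abel

theorem companionMatrix_pow_mul_lastUnitCol :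
    companionMatrix a ^ l * lastUnitCol l =
      ∑ i, (-a i) • (companionMatrix a ^ (i : ℕ) * lastUnitCol l) := by
  rcases Nat.eq_zero_or_pos l with rfl | hl
  · exact Subsingleton.elim _ _
  have hsum := companionMatrix_pow_mul_stdCol_add_sum a (Nat.sub_one_lt_of_lt hl)
  rw [Nat.sub_add_cancel hl, ← Fin.sum_univ_eq_sum_range] at hsum
  simp only [neg_smul, Finset.sum_neg_distrib, eq_neg_iff_add_eq_zero, ← hsum]
  simp [extendedCoeff, lastUnitCol, stdCol]

end companionMatrix

theorem markov_parameters_nonpos_general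
    (l : ℕ) (a : Fin l → ℝ) (ha : ∀ j, a j ≤ 0)
    (Cf : Matrix (Fin 1) (Fin l) ℝ)
    (h : ∀ ν : ℕ, ν < l → (Cf * companionMatrix a ^ ν * lastUnitCol l) 0 0 ≤ 0) :
    ∀ ν : ℕ, (Cf * companionMatrix a ^ ν * lastUnitCol l) 0 0 ≤ 0 := by
  have hrec : (⟨l, -a⟩ : LinearRecurrence ℝ).IsSolution
      fun ν => (Cf * companionMatrix a ^ ν * lastUnitCol l) 0 0 :=
    LinearRecurrence.isSolution_mul_pow_mul _ _ _ (companionMatrix_pow_mul_lastUnitCol a) Cf 0 0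
  exact hrec.nonpos (fun i => neg_nonneg.2 (ha i)) h

theorem markov_parameters_nonpos
    (l : ℕ) (hl : 1 ≤ l) (a : Fin l → ℝ) (ha : ∀ j, a j ≤ 0)
    (Cf : Matrix (Fin 1) (Fin l) ℝ)
    (h : ∀ ν : ℕ, ν < l → (Cf * companionMatrix a ^ ν * lastUnitCol l) 0 0 ≤ 0) :
    ∀ ν : ℕ, (Cf * companionMatrix a ^ ν * lastUnitCol l) 0 0 ≤ 0 :=
  markov_parameters_nonpos_general l a ha Cf h
end

section
/- Let A_f ∈ ℝ^{l×l} have spectral radius < ρ for some ρ > 0, and B_f ∈ ℝ^l, C_f ∈ ℝ^{1×l}, D_f ∈ ℝ satisfy C_f·A_f^ν·B_f ≤ 0 for all ν ∈ ℕ and D_f + C_f(ρI - A_f)^{-1}B_f > 0. Then every eigenvalue λ of A_f - B_f·D_f^{-1}·C_f satisfies |λ| < ρ. -/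
/-!
Let `G(z) = C (z - A)⁻¹ B`. For `|z| ≥ ρ`, beyond the spectral radius of `A`, the Neumann series
gives `G(z) = ∑ₖ z^{-(k+1)} C Aᵏ B`. By the matrix determinant lemma, an eigenvalue `μ` of
`A - B D⁻¹ C` outside the spectrum of `A` satisfies `D + G(μ) = 0`. All coefficients `C Aᵏ B` are
nonpositive, so for `|μ| ≥ ρ` the series gives `|G(μ)| ≤ -G(ρ)`. Since `G(ρ) ≤ 0`, the hypothesis
`D + G(ρ) > 0` forces `D > 0`, and then `D = |G(μ)| ≤ -G(ρ) < D` is absurd.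
-/

open scoped NNReal ENNReal

section BanachAlgebra

variable {A : Type*} [NormedRing A] [NormedAlgebra ℂ A]

theorem spectrum.spectralRadius_lt_nnnorm_of_forall_norm_lt [CompleteSpace A] {a : A} {r : ℝ}
    (hr : 0 < r) (h : ∀ μ ∈ spectrum ℂ a, ‖μ‖ < r) {z : ℂ} (hz : r ≤ ‖z‖) :
    spectralRadius ℂ a < ‖z‖₊ := by
  rcases (spectrum ℂ a).eq_empty_or_nonempty with he | hne
  · simpa [spectralRadius, he] using hr.trans_le hz
  · exact spectrum.spectralRadius_lt_of_forall_lt_of_nonempty hne fun μ hμ =>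
      (h μ hμ).trans_le hz

variable [CompleteSpace A]

theorem spectrum.hasSum_pow_smul_inverse_one_sub_smul (a : A) {z : ℂ}
    (hz : (‖z‖₊ : ℝ≥0∞) < (spectralRadius ℂ a)⁻¹) :
    HasSum (fun n => z ^ n • a ^ n) (Ring.inverse (1 - z • a)) := by
  obtain ⟨r, hzr, hr⟩ := ENNReal.lt_iff_exists_nnreal_btwn.mp hz
  have hzr' : ‖z‖₊ < r := ENNReal.coe_lt_coe.mp hzr
  -- `z ↦ (1 - z • a)⁻¹` is holomorphic on the disc of radius `(spectralRadius ℂ a)⁻¹`, so its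
  -- power series `∑ zⁿ aⁿ` converges there.
  have H := (hasFPowerSeriesOnBall_inverse_one_sub_smul ℂ a).exchange_radius
    ((spectrum.differentiableOn_inverse_one_sub_smul hr).hasFPowerSeriesOnBall (pos_of_gt hzr'))
  simpa using H.hasSum (by simpa [← NNReal.coe_lt_coe] using hzr')

theorem spectrum.hasSum_resolvent (a : A) {z : ℂ} (hz : spectralRadius ℂ a < ‖z‖₊) :
    HasSum (fun n => z⁻¹ ^ (n + 1) • a ^ n) (resolvent a z) := by
  have hz0 : z ≠ 0 := by
    rintro rfl
    simp at hz
  have hinv : (‖z⁻¹‖₊ : ℝ≥0∞) < (spectralRadius ℂ a)⁻¹ := by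
    rwa [nnnorm_inv, ENNReal.coe_inv (nnnorm_ne_zero_iff.mpr hz0), ENNReal.inv_lt_inv]
  have hres : resolvent a z = z⁻¹ • Ring.inverse (1 - z⁻¹ • a) := by
    rw [eq_inv_smul_iff₀ hz0]
    simpa [resolvent, Units.smul_def] using
      spectrum.units_smul_resolvent_self (r := Units.mk0 z hz0) (a := a)
  rw [hres]
  simpa [pow_succ', mul_smul] using
    (spectrum.hasSum_pow_smul_inverse_one_sub_smul a hinv).const_smul z⁻¹

end BanachAlgebra

theorem HasSum.matrix_mul_mul_apply {R ι l m p : Type*} [Semiring R] [TopologicalSpace R]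
    [IsTopologicalSemiring R] [Fintype m] {f : ι → Matrix m m R} {X : Matrix m m R}
    (hf : HasSum f X) (c : Matrix l m R) (b : Matrix m p R) (i : l) (j : p) :
    HasSum (fun k => (c * f k * b) i j) ((c * X * b) i j) :=
  let entry : Matrix m m R →+ R :=
    { toFun := fun Y => (c * Y * b) i j
      map_zero' := by simp
      map_add' := fun Y Z => by simp [Matrix.mul_add, Matrix.add_mul] }
  hf.map entry
    (((continuous_const.matrix_mul continuous_id).matrix_mul continuous_const).matrix_elem i j)

section Matrix

variable {n : Type*} [Fintype n] [DecidableEq n]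

theorem RingHom.map_matrix_inv {K L : Type*} [Field K] [Field L] (f : K →+* L)
    (M : Matrix n n K) : M⁻¹.map f = (M.map f)⁻¹ := by
  simp only [Matrix.inv_def, Ring.inverse_eq_inv', Matrix.map_smul' _ _ _ (map_mul f), map_inv₀]
  rw [RingHom.map_det]
  exact congrArg _ (f.map_adjugate M)

theorem Matrix.resolvent_map_algebraMap {K L : Type*} [Field K] [Field L] [Algebra K L]
    (a : Matrix n n K) (r : K) :
    resolvent (a.map (algebraMap K L)) (algebraMap K L r) =
      (resolvent a r).map (algebraMap K L) := by
  simp only [resolvent, ← Matrix.nonsing_inv_eq_ringInverse]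
  rw [RingHom.map_matrix_inv, Matrix.map_sub _ (map_sub _),
    Matrix.map_algebraMap _ _ (map_zero _) rfl, IsScalarTower.algebraMap_apply K L (Matrix n n L)]

theorem Matrix.add_mul_resolvent_mul_eq_zero {K ι : Type*} [Field K] [Unique ι] {a : Matrix n n K}
    (b : Matrix n ι K) (c : Matrix ι n K) {d : K} (hd : d ≠ 0) {μ : K} (ha : μ ∉ spectrum K a)
    (hμ : μ ∈ spectrum K (a - d⁻¹ • (b * c))) :
    d + (c * resolvent a μ * b) default default = 0 := by
  rw [spectrum.notMem_iff, Matrix.isUnit_iff_isUnit_det] at ha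
  rw [spectrum.mem_iff, Matrix.isUnit_iff_isUnit_det, ← Matrix.mul_smul, sub_sub_eq_add_sub,
    add_sub_right_comm, Matrix.det_add_mul b _ ha, IsUnit.mul_iff, not_and] at hμ
  have h := hμ ha
  rw [Matrix.det_unique, isUnit_iff_ne_zero, not_not, Matrix.add_apply, Matrix.one_apply_eq,
    Matrix.smul_mul, Matrix.smul_mul, Matrix.smul_apply, smul_eq_mul] at h
  rw [resolvent, ← Matrix.nonsing_inv_eq_ringInverse]
  field_simp at h
  linear_combination h

-- No norm on matrices is involved; the `L∞` operator norm, which induces the product topology,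
-- supplies the Banach algebra structure.
theorem Matrix.hasSum_resolvent (a : Matrix n n ℂ) {r : ℝ} (hr : 0 < r)
    (h : ∀ μ ∈ spectrum ℂ a, ‖μ‖ < r) {z : ℂ} (hz : r ≤ ‖z‖) :
    HasSum (fun k => z⁻¹ ^ (k + 1) • a ^ k) (resolvent a z) := by
  let := Matrix.linftyOpNormedRing (n := n) (α := ℂ)
  let := Matrix.linftyOpNormedAlgebra (n := n) (R := ℂ) (α := ℂ)
  exact spectrum.hasSum_resolvent a
    (spectrum.spectralRadius_lt_nnnorm_of_forall_norm_lt hr h hz)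

theorem Matrix.hasSum_inv_smul_one_sub (a : Matrix n n ℝ) {r : ℝ} (hr : 0 < r)
    (h : ∀ μ ∈ spectrum ℂ (a.map (algebraMap ℝ ℂ)), ‖μ‖ < r) :
    HasSum (fun k => r⁻¹ ^ (k + 1) • a ^ k) (r • 1 - a)⁻¹ := by
  have H := Matrix.hasSum_resolvent _ hr h (z := algebraMap ℝ ℂ r) (by simp [abs_of_pos hr])
  rw [Matrix.resolvent_map_algebraMap] at H
  simp only [resolvent, Algebra.algebraMap_eq_smul_one,
    ← Matrix.nonsing_inv_eq_ringInverse, ← Matrix.map_pow] at H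
  refine Pi.hasSum.mpr fun i => Pi.hasSum.mpr fun j => Complex.hasSum_ofReal.mp ?_
  simpa using Pi.hasSum.mp (Pi.hasSum.mp H i) j

end Matrix

theorem norm_le_neg_of_hasSum_of_nonpos {𝕜 : Type*} [RCLike 𝕜] {c : ℕ → ℝ} (hc : ∀ k, c k ≤ 0)
    {r : ℝ} (hr : 0 < r) {z : 𝕜} (hz : r ≤ ‖z‖) {w : 𝕜} {t : ℝ}
    (hw : HasSum (fun k => z⁻¹ ^ (k + 1) * c k) w) (ht : HasSum (fun k => r⁻¹ ^ (k + 1) * c k) t) :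
    ‖w‖ ≤ -t := by
  refine hw.norm_le_of_bounded ht.neg fun k => ?_
  rw [norm_mul, norm_pow, norm_inv, RCLike.norm_ofReal, abs_of_nonpos (hc k), neg_mul_eq_mul_neg]
  gcongr
  exact neg_nonneg.mpr (hc k)

theorem closed_loop_filter_stable
    (l : ℕ) (ρ : ℝ) (hρ : 0 < ρ)
    (Af : Matrix (Fin l) (Fin l) ℝ) (Bf : Matrix (Fin l) (Fin 1) ℝ)
    (Cf : Matrix (Fin 1) (Fin l) ℝ) (Df : ℝ)
    (hspec : ∀ μ ∈ spectrum ℂ (Af.map (algebraMap ℝ ℂ)), ‖μ‖ < ρ)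
    (hC : ∀ ν : ℕ, (Cf * Af ^ ν * Bf) 0 0 ≤ 0)
    (hpos : 0 < Df + (Cf * (ρ • (1 : Matrix (Fin l) (Fin l) ℝ) - Af)⁻¹ * Bf) 0 0) :
    ∀ μ ∈ spectrum ℂ ((Af - Df⁻¹ • (Bf * Cf)).map (algebraMap ℝ ℂ)), ‖μ‖ < ρ := by
  have hρ_sum : HasSum (fun k => ρ⁻¹ ^ (k + 1) * (Cf * Af ^ k * Bf) 0 0)
      ((Cf * (ρ • (1 : Matrix (Fin l) (Fin l) ℝ) - Af)⁻¹ * Bf) 0 0) := by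
    simpa [Matrix.mul_smul, Matrix.smul_mul] using
      (Matrix.hasSum_inv_smul_one_sub Af hρ hspec).matrix_mul_mul_apply Cf Bf 0 0
  have hDf : 0 < Df := by
    linarith [hρ_sum.nonpos fun k => mul_nonpos_of_nonneg_of_nonpos (by positivity) (hC k)]
  intro μ hμ
  by_contra! hμρ
  set f := algebraMap ℝ ℂ
  set G := (Cf.map f * resolvent (Af.map f) μ * Bf.map f) 0 0
  have hμ_sum : HasSum (fun k => μ⁻¹ ^ (k + 1) * ((Cf * Af ^ k * Bf) 0 0 : ℂ)) G := by
    have := (Matrix.hasSum_resolvent _ hρ hspec hμρ).matrix_mul_mul_apply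
      (Cf.map f) (Bf.map f) 0 0
    simp only [Matrix.mul_smul, Matrix.smul_mul, Matrix.smul_apply, smul_eq_mul, ← Matrix.map_pow,
      ← Matrix.map_mul, Matrix.map_apply] at this
    exact this
  have hG : (Df : ℂ) + G = 0 := by
    refine Matrix.add_mul_resolvent_mul_eq_zero _ _ (by exact_mod_cast hDf.ne')
      (fun h => (hspec μ h).not_ge hμρ) ?_
    rwa [Matrix.map_sub _ (map_sub f), Matrix.map_smul' _ _ _ (map_mul f), Matrix.map_mul,
      map_inv₀] at hμ
  have := norm_le_neg_of_hasSum_of_nonpos hC hρ hμρ hμ_sum hρ_sum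
  rw [eq_neg_of_add_eq_zero_right hG, norm_neg, Complex.norm_real,
    Real.norm_of_nonneg hDf.le] at this
  linarith
end

section
/- Let A ∈ ℝ^{n×n}, Å ∈ ℝ^{n̂×n̂} have no common eigenvalues, B ∈ ℝ^n, Ĉ ∈ ℝ^{1×n̂}, B̂ ∈ ℝ^{n̂}, D̂ ∈ ℝ, and let K be the unique solution of the Sylvester equation A·K - K·Å + B·Ĉ = 0. Suppose (A,B) is controllable and for every eigenvalue λ of A, the scalar Ĝ(λ) := D̂ + Ĉ(λI - Å)^{-1}B̂ is nonzero. Then the pair (A, B·D̂ - K·B̂) is controllable. -/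
open scoped Matrix

/-- Kalman controllability matrix `[b, Ab, …, A^{n-1}b]`. -/
def ctrbMat {n : ℕ} (A : Matrix (Fin n) (Fin n) ℝ) (b : Fin n → ℝ) :
    Matrix (Fin n) (Fin n) ℝ :=
  Matrix.of fun i j => ((A ^ (j : ℕ)) *ᵥ b) i

/-!
By the Popov–Belevitch–Hautus test, a pair `(A, b)` is controllable iff no nonzero left
eigenvector `x` of `A` (over `ℂ`) satisfies `x ⬝ b = 0`. If `x A = μ x`, then `μ` is not an
eigenvalue of `Å`, and the Sylvester equation gives `x K (μ I - Å) = -(x B) Ĉ`; hence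
`x (B D̂ - K B̂) = (x B) Ĝ(μ)`, which is nonzero because `x B ≠ 0` (PBH for `(A, B)`) and
`Ĝ(μ) ≠ 0`.
-/

open Matrix Polynomial

section Kalman

variable {R : Type*} [CommRing R] {n : ℕ}

def kalmanMatrix (M : Matrix (Fin n) (Fin n) R) (b : Fin n → R) : Matrix (Fin n) (Fin n) R :=
  of fun i j => (M ^ (j : ℕ) *ᵥ b) i

theorem kalmanMatrix_map {S : Type*} [CommRing S] (f : R →+* S) (M : Matrix (Fin n) (Fin n) R)
    (b : Fin n → R) : (kalmanMatrix M b).map f = kalmanMatrix (M.map f) (f ∘ b) := by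
  ext i j
  simp [kalmanMatrix, ← Matrix.map_pow, RingHom.map_mulVec]

theorem vecMul_kalmanMatrix (M : Matrix (Fin n) (Fin n) R) (b x : Fin n → R) :
    x ᵥ* kalmanMatrix M b = fun j : Fin n => x ⬝ᵥ (M ^ (j : ℕ) *ᵥ b) := by
  ext j
  simp only [vecMul, dotProduct, kalmanMatrix, of_apply]

theorem dotProduct_pow_mulVec_of_vecMul_eq_smul {M : Matrix (Fin n) (Fin n) R} {x : Fin n → R}
    {μ : R} (hx : x ᵥ* M = μ • x) (b : Fin n → R) (k : ℕ) :
    x ⬝ᵥ (M ^ k *ᵥ b) = μ ^ k * (x ⬝ᵥ b) := by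
  induction k with
  | zero => simp
  | succ k ih =>
    rw [pow_succ', ← mulVec_mulVec, dotProduct_mulVec, hx, smul_dotProduct, ih, smul_eq_mul,
      pow_succ', mul_assoc]

theorem dotProduct_pow_mulVec_eq_zero {M : Matrix (Fin n) (Fin n) R} {b x : Fin n → R}
    (h : ∀ k < n, x ⬝ᵥ (M ^ k *ᵥ b) = 0) (k : ℕ) : x ⬝ᵥ (M ^ k *ᵥ b) = 0 := by
  nontriviality R
  rcases n.eq_zero_or_pos with rfl | hn
  · simp
  -- Cayley–Hamilton: `M ^ k` is a polynomial in `M` of degree `< n`.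
  have hdeg : (X ^ k %ₘ M.charpoly).natDegree < n := by
    have hcp : M.charpoly.natDegree = n := by simp
    refine (natDegree_modByMonic_lt _ M.charpoly_monic fun h1 => ?_).trans_eq hcp
    rw [h1, natDegree_one] at hcp
    omega
  rw [pow_eq_aeval_mod_charpoly, aeval_eq_sum_range' hdeg, sum_mulVec, dotProduct_sum]
  refine Finset.sum_eq_zero fun i hi => ?_
  rw [smul_mulVec, dotProduct_smul, h i (Finset.mem_range.1 hi), smul_zero]

end Kalman

section PBH

variable {K : Type*} [Field K] {n : ℕ}

theorem det_kalmanMatrix_eq_zero_iff {M : Matrix (Fin n) (Fin n) K} {b : Fin n → K} :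
    (kalmanMatrix M b).det = 0 ↔ ∃ x ≠ 0, ∀ k, x ⬝ᵥ (M ^ k *ᵥ b) = 0 := by
  rw [← exists_vecMul_eq_zero_iff]
  refine exists_congr fun x => and_congr_right fun _ => ?_
  rw [vecMul_kalmanMatrix, funext_iff]
  exact ⟨fun h => dotProduct_pow_mulVec_eq_zero fun k hk => h ⟨k, hk⟩, fun h j => h j⟩

def krylovAnnihilator (M : Matrix (Fin n) (Fin n) K) (b : Fin n → K) :
    Submodule K (Fin n → K) where
  carrier := {x | ∀ k, x ⬝ᵥ (M ^ k *ᵥ b) = 0}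
  add_mem' hx hy k := by rw [add_dotProduct, hx k, hy k, add_zero]
  zero_mem' k := zero_dotProduct _
  smul_mem' c x hx k := by rw [smul_dotProduct, hx k, smul_zero]

theorem vecMul_mem_krylovAnnihilator {M : Matrix (Fin n) (Fin n) K} {b x : Fin n → K}
    (hx : x ∈ krylovAnnihilator M b) : x ᵥ* M ∈ krylovAnnihilator M b := fun k => by
  rw [← dotProduct_mulVec, mulVec_mulVec, ← pow_succ']
  exact hx (k + 1)

theorem exists_left_eigenvector_of_det_kalmanMatrix_eq_zero [IsAlgClosed K]
    {M : Matrix (Fin n) (Fin n) K} {b : Fin n → K} (h : (kalmanMatrix M b).det = 0) :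
    ∃ (μ : K) (x : Fin n → K), x ≠ 0 ∧ x ᵥ* M = μ • x ∧ x ⬝ᵥ b = 0 := by
  obtain ⟨x, hx0, hx⟩ := det_kalmanMatrix_eq_zero_iff.1 h
  have : Nontrivial (krylovAnnihilator M b) :=
    ⟨⟨⟨x, hx⟩, 0, fun h => hx0 congr(Subtype.val $h)⟩⟩
  obtain ⟨μ, hμ⟩ := Module.End.exists_eigenvalue
    ((vecMulLinear M).restrict fun _ => vecMul_mem_krylovAnnihilator (b := b))
  obtain ⟨y, hy⟩ := hμ.exists_hasEigenvector
  refine ⟨μ, y, fun h => hy.2 (Subtype.ext h), congr(Subtype.val $(hy.apply_eq_smul)), ?_⟩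
  simpa using y.2 0

theorem det_kalmanMatrix_ne_zero_iff [IsAlgClosed K] {M : Matrix (Fin n) (Fin n) K}
    {b : Fin n → K} :
    (kalmanMatrix M b).det ≠ 0 ↔
      ∀ (μ : K) (x : Fin n → K), x ᵥ* M = μ • x → x ⬝ᵥ b = 0 → x = 0 := by
  refine ⟨fun h μ x hx hxb => ?_, fun h hdet => ?_⟩
  · by_contra hx0
    refine h (det_kalmanMatrix_eq_zero_iff.2 ⟨x, hx0, fun k => ?_⟩)
    rw [dotProduct_pow_mulVec_of_vecMul_eq_smul hx, hxb, mul_zero]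
  · obtain ⟨μ, x, hx0, hx, hxb⟩ := exists_left_eigenvector_of_det_kalmanMatrix_eq_zero hdet
    exact hx0 (h μ x hx hxb)

end PBH

section Sylvester

variable {K : Type*} [Field K] {m p ι κ : Type*} [Fintype m] [Fintype p] [DecidableEq p]
  [Fintype ι] {A : Matrix m m K} {Ah : Matrix p p K} {B : Matrix m ι K} {C : Matrix ι p K}
  {X : Matrix m p K} {x : m → K} {μ : K}

theorem vecMul_eq_of_sylvester (hX : A * X - X * Ah + B * C = 0) (hx : x ᵥ* A = μ • x)
    (hμ : IsUnit (μ • 1 - Ah)) : x ᵥ* X = -((x ᵥ* B) ᵥ* (C * (μ • 1 - Ah)⁻¹)) := by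
  have hXμ : (x ᵥ* X) ᵥ* (μ • 1 - Ah) = -((x ᵥ* B) ᵥ* C) := by
    rw [vecMul_sub, vecMul_smul, vecMul_one, ← smul_vecMul, ← hx, vecMul_vecMul, vecMul_vecMul,
      ← vecMul_sub, eq_neg_of_add_eq_zero_left hX, vecMul_neg, vecMul_vecMul]
  rw [← vecMul_vecMul, ← neg_vecMul, ← hXμ, vecMul_vecMul,
    mul_nonsing_inv _ ((isUnit_iff_isUnit_det _).1 hμ), vecMul_one]

theorem vecMul_sub_mul_of_sylvester [Fintype κ] (hX : A * X - X * Ah + B * C = 0)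
    (hx : x ᵥ* A = μ • x) (hμ : IsUnit (μ • 1 - Ah)) (D : Matrix ι κ K) (Bh : Matrix p κ K) :
    x ᵥ* (B * D - X * Bh) = (x ᵥ* B) ᵥ* (D + C * (μ • 1 - Ah)⁻¹ * Bh) := by
  rw [vecMul_sub, ← vecMul_vecMul x X, vecMul_eq_of_sylvester hX hx hμ]
  simp only [neg_vecMul, sub_neg_eq_add, vecMul_add, vecMul_vecMul, Matrix.mul_assoc]

end Sylvester

theorem mem_spectrum_of_vecMul_eq_smul {K m : Type*} [Field K] [Fintype m] [DecidableEq m]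
    {M : Matrix m m K} {x : m → K} {μ : K} (hx0 : x ≠ 0) (hx : x ᵥ* M = μ • x) :
    μ ∈ spectrum K M := by
  rw [spectrum.mem_iff, Algebra.algebraMap_eq_smul_one, isUnit_iff_isUnit_det, isUnit_iff_ne_zero,
    not_not, ← exists_vecMul_eq_zero_iff]
  exact ⟨x, hx0, by rw [vecMul_sub, vecMul_smul, vecMul_one, hx, sub_self]⟩

theorem det_ctrbMat_ne_zero_iff {n : ℕ} {A : Matrix (Fin n) (Fin n) ℝ} {b : Fin n → ℝ} :
    (ctrbMat A b).det ≠ 0 ↔ ∀ (μ : ℂ) (x : Fin n → ℂ),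
      x ᵥ* A.map (algebraMap ℝ ℂ) = μ • x → x ⬝ᵥ (algebraMap ℝ ℂ ∘ b) = 0 → x = 0 := by
  rw [← det_kalmanMatrix_ne_zero_iff, ← kalmanMatrix_map, ← RingHom.mapMatrix_apply,
    ← RingHom.map_det, map_ne_zero_iff _ (algebraMap ℝ ℂ).injective]
  rfl

theorem controllability_preserved
    (n nh : ℕ)
    (A : Matrix (Fin n) (Fin n) ℝ) (Ah : Matrix (Fin nh) (Fin nh) ℝ)
    (B : Matrix (Fin n) (Fin 1) ℝ) (Bh : Matrix (Fin nh) (Fin 1) ℝ)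
    (Ch : Matrix (Fin 1) (Fin nh) ℝ) (Dh : ℝ)
    (K : Matrix (Fin n) (Fin nh) ℝ)
    (hspec : spectrum ℂ (A.map (algebraMap ℝ ℂ)) ∩
      spectrum ℂ (Ah.map (algebraMap ℝ ℂ)) = ∅)
    (hK : A * K - K * Ah + B * Ch = 0)
    (hctrb : (ctrbMat A (fun i => B i 0)).det ≠ 0)
    (hG : ∀ μ ∈ spectrum ℂ (A.map (algebraMap ℝ ℂ)),
      algebraMap ℝ ℂ Dh +
        ((Ch.map (algebraMap ℝ ℂ)) *
          (μ • (1 : Matrix (Fin nh) (Fin nh) ℂ) - Ah.map (algebraMap ℝ ℂ))⁻¹ *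
          (Bh.map (algebraMap ℝ ℂ))) 0 0 ≠ 0) :
    (ctrbMat A (fun i => (Dh • B - K * Bh) i 0)).det ≠ 0 := by
  rw [det_ctrbMat_ne_zero_iff] at hctrb ⊢
  set f := algebraMap ℝ ℂ
  intro μ x hx hxb
  by_contra hx0
  have hμA : μ ∈ spectrum ℂ (A.map f) := mem_spectrum_of_vecMul_eq_smul hx0 hx
  have hμAh : IsUnit (μ • 1 - Ah.map f) := by
    rw [← Algebra.algebraMap_eq_smul_one, ← spectrum.notMem_iff]
    exact fun hμ => (Set.eq_empty_iff_forall_notMem.1 hspec) μ ⟨hμA, hμ⟩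
  have hKc : A.map f * K.map f - K.map f * Ah.map f + B.map f * Ch.map f = 0 := by
    simpa [Matrix.map_add _ (map_add f), Matrix.map_sub _ (map_sub f), Matrix.map_mul]
      using congr(Matrix.map $hK f)
  have hB' : (Dh • B - K * Bh).map f =
      B.map f * (f Dh • 1 : Matrix (Fin 1) (Fin 1) ℂ) - K.map f * Bh.map f := by
    simp [Matrix.map_sub _ (map_sub f), Matrix.map_mul, Matrix.map_smulₛₗ _ f Dh (map_mul f Dh)]
  set G : Matrix (Fin 1) (Fin 1) ℂ := f Dh • 1 + Ch.map f * (μ • 1 - Ah.map f)⁻¹ * Bh.map f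
  have key : x ᵥ* (Dh • B - K * Bh).map f = (x ᵥ* B.map f) ᵥ* G :=
    hB' ▸ vecMul_sub_mul_of_sylvester hKc hx hμAh _ _
  have hβ : (x ᵥ* B.map f) 0 ≠ 0 := fun h => hx0 (hctrb μ x hx h)
  have hGμ : G 0 0 ≠ 0 := by simpa [G] using hG μ hμA
  refine mul_ne_zero hβ hGμ ?_
  simpa [vecMul, dotProduct] using (congrFun key 0).symm.trans hxb
end

section
/- Let A ∈ ℝ^{n×n} with characteristic polynomial α, let K solve the Sylvester equation A·K - K·Å + B·Ĉ = 0 where A and Å have no common eigenvalues. If (A,B) is controllable and S := r_n(A)(I_n ⊗ B)H_α is the transformation bringing (A,B,C) to controllable canonical form (so S^{-1}AS = C_α, S^{-1}B = e_n), then K = S·(I_n ⊗ Ĉ)·c_n(Å)·α(Å)^{-1}, where c_n(z) = col(1, z, …, z^{n-1}) and α(Å) is invertible because no eigenvalue of Å is a root of α. -/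
open scoped Matrix

/-- The Hankel matrix `H_α` built from the coefficients of the characteristic
polynomial `α` of `A`: `(H_α)_{ij} = α_{i+j+1}` (with `α_n = 1`, zero beyond). -/
def hankelMat {n : ℕ} (α : Polynomial ℝ) : Matrix (Fin n) (Fin n) ℝ :=
  Matrix.of fun i j => α.coeff ((i : ℕ) + (j : ℕ) + 1)

open Finset Polynomial

private lemma triangle_sum {M : Type*} [AddCommMonoid M] (N : ℕ) (f : ℕ → ℕ → M) :
    ∑ k ∈ range (N + 1), ∑ j ∈ range k, f k j
      = ∑ j ∈ range N, ∑ m ∈ range (N - j), f (m + j + 1) j := by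
  rw [Finset.sum_sigma', Finset.sum_sigma']
  refine Finset.sum_nbij' (fun p => ⟨p.2, p.1 - p.2 - 1⟩) (fun p => ⟨p.2 + p.1 + 1, p.1⟩)
    ?_ ?_ ?_ ?_ ?_
  · rintro ⟨k, j⟩ h
    simp only [Finset.mem_sigma, Finset.mem_range] at h ⊢
    omega
  · rintro ⟨j, m⟩ h
    simp only [Finset.mem_sigma, Finset.mem_range] at h ⊢
    omega
  · rintro ⟨k, j⟩ h
    simp only [Finset.mem_sigma, Finset.mem_range] at h
    have hk : k - j - 1 + j + 1 = k := by omega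
    simp [hk]
  · rintro ⟨j, m⟩ h
    simp only [Finset.mem_sigma, Finset.mem_range] at h
    have hm : m + j + 1 - j - 1 = m := by omega
    simp [hm]
  · rintro ⟨k, j⟩ h
    simp only [Finset.mem_sigma, Finset.mem_range] at h
    have hk : k - j - 1 + j + 1 = k := by omega
    simp [hk]

private lemma pow_mul_sylv {n nh : ℕ} (A : Matrix (Fin n) (Fin n) ℝ)
    (Ah : Matrix (Fin nh) (Fin nh) ℝ) (K BC : Matrix (Fin n) (Fin nh) ℝ)
    (h : A * K = K * Ah - BC) (k : ℕ) :
    A ^ k * K = K * Ah ^ k - ∑ j ∈ range k, A ^ (k - 1 - j) * BC * Ah ^ j := by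
  induction k with
  | zero => simp
  | succ k ih =>
    have h1 : A ^ (k + 1) * K = A * (A ^ k * K) := by
      rw [← Matrix.mul_assoc, ← pow_succ']
    rw [h1, ih, Matrix.mul_sub, ← Matrix.mul_assoc, h, Matrix.sub_mul, Matrix.mul_assoc K,
      ← pow_succ', Matrix.mul_sum, Finset.sum_range_succ]
    have h2 : ∀ j ∈ range k, A * (A ^ (k - 1 - j) * BC * Ah ^ j)
        = A ^ (k + 1 - 1 - j) * BC * Ah ^ j := by
      intro j hj
      rw [Finset.mem_range] at hj
      rw [← Matrix.mul_assoc, ← Matrix.mul_assoc, ← pow_succ']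
      have : k - 1 - j + 1 = k + 1 - 1 - j := by omega
      rw [this]
    rw [Finset.sum_congr rfl h2]
    have h3 : A ^ (k + 1 - 1 - k) * BC * Ah ^ k = BC * Ah ^ k := by
      simp
    rw [h3]
    abel

theorem sylvester_solution_formula
    (n nh : ℕ)
    (A : Matrix (Fin n) (Fin n) ℝ) (Ah : Matrix (Fin nh) (Fin nh) ℝ)
    (B : Matrix (Fin n) (Fin 1) ℝ) (Ch : Matrix (Fin 1) (Fin nh) ℝ)
    (K : Matrix (Fin n) (Fin nh) ℝ)
    (hspec : spectrum ℂ (A.map (algebraMap ℝ ℂ)) ∩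
      spectrum ℂ (Ah.map (algebraMap ℝ ℂ)) = ∅)
    (hK : A * K - K * Ah + B * Ch = 0)
    (hctrb : (ctrbMat A (fun i => B i 0)).det ≠ 0)
    (S : Matrix (Fin n) (Fin n) ℝ)
    (hS : S = ctrbMat A (fun i => B i 0) * hankelMat A.charpoly)
    (halpha : IsUnit (Polynomial.aeval Ah A.charpoly)) :
    K = S * (Matrix.of fun (i : Fin n) (j : Fin nh) => (Ch * Ah ^ (i : ℕ)) 0 j) *
      (Polynomial.aeval Ah A.charpoly)⁻¹ := by
  set α := A.charpoly with hα
  set M : Matrix (Fin n) (Fin nh) ℝ :=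
    Matrix.of fun (i : Fin n) (j : Fin nh) => (Ch * Ah ^ (i : ℕ)) 0 j with hM
  have hdeg : α.natDegree = n := by
    rw [hα, Matrix.charpoly_natDegree_eq_dim, Fintype.card_fin]
  have hsyl : A * K = K * Ah - B * Ch := by
    have := hK
    rw [sub_add, sub_eq_zero] at this
    exact this
  set T : ℕ → ℕ → Matrix (Fin n) (Fin nh) ℝ := fun m j => A ^ m * (B * Ch) * Ah ^ j with hT
  -- Step 1: K * α(Ah) = triangular double sum
  have key : K * (Polynomial.aeval Ah α)
      = ∑ j ∈ range n, ∑ m ∈ range (n - j), α.coeff (m + j + 1) • T m j := by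
    rw [Polynomial.aeval_eq_sum_range, hdeg, Matrix.mul_sum]
    have e1 : ∀ k, K * (α.coeff k • Ah ^ k)
        = α.coeff k • (A ^ k * K)
          + α.coeff k • ∑ j ∈ range k, A ^ (k - 1 - j) * (B * Ch) * Ah ^ j := by
      intro k
      rw [Matrix.mul_smul, ← smul_add]
      congr 1
      have h := pow_mul_sylv A Ah K (B * Ch) hsyl k
      rw [eq_sub_iff_add_eq] at h
      exact h.symm
    rw [Finset.sum_congr rfl (fun k _ => e1 k), Finset.sum_add_distrib]
    have z : ∑ k ∈ range (n + 1), α.coeff k • (A ^ k * K) = 0 := by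
      have hz : (Polynomial.aeval A α) = 0 := Matrix.aeval_self_charpoly A
      calc ∑ k ∈ range (n + 1), α.coeff k • (A ^ k * K)
          = (∑ k ∈ range (n + 1), α.coeff k • A ^ k) * K := by
            rw [Matrix.sum_mul]
            exact Finset.sum_congr rfl fun k _ => (Matrix.smul_mul _ _ _).symm
        _ = (Polynomial.aeval A α) * K := by
            rw [Polynomial.aeval_eq_sum_range, hdeg]
        _ = 0 := by rw [hz, Matrix.zero_mul]
    rw [z, zero_add]
    have e2 : ∀ k ∈ range (n + 1),
        α.coeff k • ∑ j ∈ range k, A ^ (k - 1 - j) * (B * Ch) * Ah ^ j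
          = ∑ j ∈ range k, α.coeff k • (A ^ (k - 1 - j) * (B * Ch) * Ah ^ j) := by
      intro k _
      exact Finset.smul_sum
    rw [Finset.sum_congr rfl e2,
      triangle_sum n (fun k j => α.coeff k • (A ^ (k - 1 - j) * (B * Ch) * Ah ^ j))]
    refine Finset.sum_congr rfl fun j hj => Finset.sum_congr rfl fun m hm => ?_
    have : m + j + 1 - 1 - j = m := by omega
    rw [this]
  -- extend the inner sum using vanishing coefficients
  have extend : ∑ j ∈ range n, ∑ m ∈ range (n - j), α.coeff (m + j + 1) • T m j
      = ∑ j ∈ range n, ∑ m ∈ range n, α.coeff (m + j + 1) • T m j := by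
    refine Finset.sum_congr rfl fun j hj => ?_
    refine Finset.sum_subset (Finset.range_subset_range.mpr (by omega)) fun m hm hm' => ?_
    rw [Finset.mem_range] at hm hm'
    push_neg at hm'
    have : α.natDegree < m + j + 1 := by omega
    rw [Polynomial.coeff_eq_zero_of_natDegree_lt this, zero_smul]
  -- Step 2: S * M equals the full double sum
  have hSM : S * M = ∑ j ∈ range n, ∑ m ∈ range n, α.coeff (m + j + 1) • T m j := by
    have hCB : ∀ (m : ℕ) (p : Fin n), ((A ^ m) *ᵥ fun i => B i 0) p = (A ^ m * B) p 0 := by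
      intro m p
      simp [Matrix.mulVec, Matrix.mul_apply, dotProduct]
    have hTentry : ∀ (m j : ℕ) (p : Fin n) (q : Fin nh),
        (T m j) p q = (A ^ m * B) p 0 * (Ch * Ah ^ j) 0 q := by
      intro m j p q
      rw [hT]
      simp only
      rw [Matrix.mul_assoc, Matrix.mul_assoc, ← Matrix.mul_assoc B]
      rw [show A ^ m * (B * Ch * Ah ^ j) = (A ^ m * B) * (Ch * Ah ^ j) by
        rw [Matrix.mul_assoc, Matrix.mul_assoc]]
      rw [Matrix.mul_apply, Fin.sum_univ_one]
    rw [hS]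
    ext p q
    rw [Matrix.mul_apply]
    have lhs1 : ∀ i : Fin n, ((ctrbMat A (fun i => B i 0) * hankelMat α : Matrix (Fin n) (Fin n) ℝ)) p i * M i q
        = ∑ m : Fin n, (A ^ (m : ℕ) * B) p 0 * α.coeff ((m : ℕ) + (i : ℕ) + 1)
            * (Ch * Ah ^ (i : ℕ)) 0 q := by
      intro i
      rw [Matrix.mul_apply, Finset.sum_mul]
      refine Finset.sum_congr rfl fun m _ => ?_
      rw [ctrbMat, hankelMat, hM]
      simp only [Matrix.of_apply]
      rw [hCB]
    rw [Finset.sum_congr rfl fun i _ => lhs1 i]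
    rw [Matrix.sum_apply]
    have rhs1 : ∀ j ∈ range n, (∑ m ∈ range n, α.coeff (m + j + 1) • T m j) p q
        = ∑ m ∈ range n, α.coeff (m + j + 1) * ((A ^ m * B) p 0 * (Ch * Ah ^ j) 0 q) := by
      intro j _
      rw [Matrix.sum_apply]
      refine Finset.sum_congr rfl fun m _ => ?_
      rw [Matrix.smul_apply, hTentry, smul_eq_mul]
    rw [Finset.sum_congr rfl rhs1]
    rw [← Fin.sum_univ_eq_sum_range (fun j =>
      ∑ m ∈ range n, α.coeff (m + j + 1) * ((A ^ m * B) p 0 * (Ch * Ah ^ j) 0 q)) n]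
    refine Finset.sum_congr rfl fun i _ => ?_
    rw [← Fin.sum_univ_eq_sum_range (fun m =>
      α.coeff (m + (i : ℕ) + 1) * ((A ^ m * B) p 0 * (Ch * Ah ^ (i : ℕ)) 0 q)) n]
    refine Finset.sum_congr rfl fun m _ => ?_
    ring
  -- conclude
  have hKα : K * (Polynomial.aeval Ah α) = S * M := by
    rw [key, extend, hSM]
  have hdetu : IsUnit (Polynomial.aeval Ah α).det :=
    (Matrix.isUnit_iff_isUnit_det _).mp halpha
  calc K = K * ((Polynomial.aeval Ah α) * (Polynomial.aeval Ah α)⁻¹) := by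
        rw [Matrix.mul_nonsing_inv _ hdetu, Matrix.mul_one]
    _ = (K * Polynomial.aeval Ah α) * (Polynomial.aeval Ah α)⁻¹ := by
        rw [Matrix.mul_assoc]
    _ = S * M * (Polynomial.aeval Ah α)⁻¹ := by rw [hKα]
end

section
/- Suppose X is a symmetric positive definite n×n real matrix, ε > 0, and 𝒜 ∈ ℝ^{n×n}, ℬ ∈ ℝ^{n×m}, 𝒞 ∈ ℝ^{m×n}, 𝒟 ∈ ℝ^{m×m} satisfy the dissipation matrix inequality: for all x ∈ ℝⁿ, u ∈ ℝᵐ, (𝒜x + ℬu)ᵀX(𝒜x + ℬu) - xᵀXx + 2uᵀ(𝒞x + 𝒟u) + ε‖x‖² ≤ 0. If sequences x : ℕ → ℝⁿ, q : ℕ → ℝᵐ satisfy x_{t+1} = 𝒜x_t + ℬq_t and the passivity condition ∑_{t=0}^{T-1} q_tᵀ(𝒞x_t + 𝒟q_t) ≥ 0 for all T ≥ 1, then with k₋, k₊ the smallest and largest eigenvalues of X, k₋‖x_T‖² + ε∑_{t=0}^{T-1}‖x_t‖² ≤ k₊‖x_0‖² holds for all T ≥ 1; in particular ‖x_T‖ ≤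 √(k₊/k₋)·‖x_0‖ and x_t → 0 as t → ∞. -/
/-!
The quadratic form `V x = xᵀ X x` is a storage function: along a trajectory the dissipation
inequality reads `V x_{t+1} - V x_t + 2 q_tᵀ p_t + ε ‖x_t‖² ≤ 0`, and telescoping it gives
`V x_T + 2 ∑ q_tᵀ p_t + ε ∑ ‖x_t‖² ≤ V x_0`. Passivity removes the supply term and the
eigenvalue bounds `k₋ ‖v‖² ≤ V v ≤ k₊ ‖v‖²` give the energy estimate. It bounds `‖x_T‖`
uniformly and makes `∑ ‖x_t‖²` summable, so `x_t → 0`.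
-/

open scoped Matrix
open Filter Topology Finset

theorem add_sum_range_le_of_forall_succ_add_le {α : Type*} [AddCommMonoid α] [PartialOrder α]
    [IsOrderedAddMonoid α] {V w : ℕ → α} (h : ∀ t, V (t + 1) + w t ≤ V t) (T : ℕ) :
    V T + ∑ t ∈ range T, w t ≤ V 0 := by
  induction T with
  | zero => simp
  | succ T ih =>
    calc V (T + 1) + ∑ t ∈ range (T + 1), w t
        = (V (T + 1) + w T) + ∑ t ∈ range T, w t := by rw [sum_range_succ]; abel
      _ ≤ V T + ∑ t ∈ range T, w t := add_le_add_left (h T) _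
      _ ≤ V 0 := ih

theorem dotProduct_self_nonneg {ι R : Type*} [Fintype ι] [Ring R] [LinearOrder R]
    [IsStrictOrderedRing R] (v : ι → R) : 0 ≤ v ⬝ᵥ v :=
  Fintype.sum_nonneg fun i => mul_self_nonneg (v i)

theorem abs_le_sqrt_dotProduct_self {ι : Type*} [Fintype ι] (v : ι → ℝ) (i : ι) :
    |v i| ≤ Real.sqrt (v ⬝ᵥ v) := by
  rw [← Real.sqrt_mul_self_eq_abs]
  exact Real.sqrt_le_sqrt <|
    single_le_sum (f := fun j => v j * v j) (fun j _ => mul_self_nonneg (v j)) (mem_univ i)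

theorem tendsto_zero_of_tendsto_dotProduct_self {ι β : Type*} [Fintype ι] {l : Filter β}
    {x : β → ι → ℝ} (h : Tendsto (fun t => x t ⬝ᵥ x t) l (𝓝 0)) : Tendsto x l (𝓝 0) := by
  have hsqrt : Tendsto (fun t => Real.sqrt (x t ⬝ᵥ x t)) l (𝓝 0) := by
    simpa using h.sqrt
  exact tendsto_pi_nhds.2 fun i =>
    squeeze_zero_norm (fun t => abs_le_sqrt_dotProduct_self (x t) i) hsqrt

theorem sqrt_le_sqrt_div_mul_sqrt {a b kmin kmax : ℝ} (hkmin : 0 < kmin) (hb : 0 ≤ b)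
    (h : kmin * a ≤ kmax * b) : Real.sqrt a ≤ Real.sqrt (kmax / kmin) * Real.sqrt b := by
  rw [← Real.sqrt_mul' _ hb]
  refine Real.sqrt_le_sqrt ?_
  rw [div_mul_eq_mul_div, le_div_iff₀ hkmin]
  linarith

section Dissipation

variable {n m : ℕ} {ε : ℝ} {X 𝒜 : Matrix (Fin n) (Fin n) ℝ} {ℬ : Matrix (Fin n) (Fin m) ℝ}
  {𝒞 : Matrix (Fin m) (Fin n) ℝ} {𝒟 : Matrix (Fin m) (Fin m) ℝ}
  {x : ℕ → Fin n → ℝ} {q : ℕ → Fin m → ℝ}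

theorem storage_add_supply_add_sum_le_of_dissipation
    (hdis : ∀ (v : Fin n → ℝ) (u : Fin m → ℝ),
      (𝒜 *ᵥ v + ℬ *ᵥ u) ⬝ᵥ (X *ᵥ (𝒜 *ᵥ v + ℬ *ᵥ u)) - v ⬝ᵥ (X *ᵥ v) +
        2 * (u ⬝ᵥ (𝒞 *ᵥ v + 𝒟 *ᵥ u)) + ε * (v ⬝ᵥ v) ≤ 0)
    (hdyn : ∀ t, x (t + 1) = 𝒜 *ᵥ x t + ℬ *ᵥ q t) (T : ℕ) :
    x T ⬝ᵥ (X *ᵥ x T) + 2 * ∑ t ∈ range T, q t ⬝ᵥ (𝒞 *ᵥ x t + 𝒟 *ᵥ q t) +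
        ε * ∑ t ∈ range T, x t ⬝ᵥ x t ≤ x 0 ⬝ᵥ (X *ᵥ x 0) := by
  have hstep : ∀ t, x (t + 1) ⬝ᵥ (X *ᵥ x (t + 1)) +
      (2 * (q t ⬝ᵥ (𝒞 *ᵥ x t + 𝒟 *ᵥ q t)) + ε * (x t ⬝ᵥ x t)) ≤ x t ⬝ᵥ (X *ᵥ x t) := by
    intro t
    have h := hdis (x t) (q t)
    rw [← hdyn t] at h
    linarith
  have h := add_sum_range_le_of_forall_succ_add_le (V := fun t => x t ⬝ᵥ (X *ᵥ x t))
    (w := fun t => 2 * (q t ⬝ᵥ (𝒞 *ᵥ x t + 𝒟 *ᵥ q t)) + ε * (x t ⬝ᵥ x t)) hstep T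
  rwa [sum_add_distrib, ← mul_sum, ← mul_sum, ← add_assoc] at h

theorem energy_bound_of_dissipation_of_passive {kmin kmax : ℝ}
    (hkminX : ∀ v : Fin n → ℝ, kmin * (v ⬝ᵥ v) ≤ v ⬝ᵥ (X *ᵥ v))
    (hkmaxX : ∀ v : Fin n → ℝ, v ⬝ᵥ (X *ᵥ v) ≤ kmax * (v ⬝ᵥ v))
    (hdis : ∀ (v : Fin n → ℝ) (u : Fin m → ℝ),
      (𝒜 *ᵥ v + ℬ *ᵥ u) ⬝ᵥ (X *ᵥ (𝒜 *ᵥ v + ℬ *ᵥ u)) - v ⬝ᵥ (X *ᵥ v) +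
        2 * (u ⬝ᵥ (𝒞 *ᵥ v + 𝒟 *ᵥ u)) + ε * (v ⬝ᵥ v) ≤ 0)
    (hdyn : ∀ t, x (t + 1) = 𝒜 *ᵥ x t + ℬ *ᵥ q t)
    (hpass : ∀ T, 0 ≤ ∑ t ∈ range T, q t ⬝ᵥ (𝒞 *ᵥ x t + 𝒟 *ᵥ q t)) (T : ℕ) :
    kmin * (x T ⬝ᵥ x T) + ε * ∑ t ∈ range T, x t ⬝ᵥ x t ≤ kmax * (x 0 ⬝ᵥ x 0) := by
  have := storage_add_supply_add_sum_le_of_dissipation hdis hdyn T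
  linarith [hkminX (x T), hkmaxX (x 0), hpass T]

end Dissipation

theorem dissipation_implies_stability_general
    (n m : ℕ) (ε : ℝ) (hε : 0 < ε)
    (X : Matrix (Fin n) (Fin n) ℝ)
    (𝒜 : Matrix (Fin n) (Fin n) ℝ) (ℬ : Matrix (Fin n) (Fin m) ℝ)
    (𝒞 : Matrix (Fin m) (Fin n) ℝ) (𝒟 : Matrix (Fin m) (Fin m) ℝ)
    (km kp : ℝ) (hkm : 0 < km)
    (hkmX : ∀ v : Fin n → ℝ, km * (v ⬝ᵥ v) ≤ v ⬝ᵥ (X *ᵥ v))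
    (hkpX : ∀ v : Fin n → ℝ, v ⬝ᵥ (X *ᵥ v) ≤ kp * (v ⬝ᵥ v))
    (hdis : ∀ (v : Fin n → ℝ) (u : Fin m → ℝ),
      (𝒜 *ᵥ v + ℬ *ᵥ u) ⬝ᵥ (X *ᵥ (𝒜 *ᵥ v + ℬ *ᵥ u)) - v ⬝ᵥ (X *ᵥ v) +
        2 * (u ⬝ᵥ (𝒞 *ᵥ v + 𝒟 *ᵥ u)) + ε * (v ⬝ᵥ v) ≤ 0)
    (x : ℕ → Fin n → ℝ) (q : ℕ → Fin m → ℝ)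
    (hdyn : ∀ t, x (t + 1) = 𝒜 *ᵥ x t + ℬ *ᵥ q t)
    (hpass : ∀ T : ℕ, 1 ≤ T →
      0 ≤ ∑ t ∈ Finset.range T, q t ⬝ᵥ (𝒞 *ᵥ x t + 𝒟 *ᵥ q t)) :
    (∀ T : ℕ, 1 ≤ T →
      km * (x T ⬝ᵥ x T) + ε * ∑ t ∈ Finset.range T, x t ⬝ᵥ x t ≤
        kp * (x 0 ⬝ᵥ x 0)) ∧
    (∀ T : ℕ, 1 ≤ T →
      Real.sqrt (x T ⬝ᵥ x T) ≤ Real.sqrt (kp / km) * Real.sqrt (x 0 ⬝ᵥ x 0)) ∧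
    Filter.Tendsto x Filter.atTop (nhds 0) := by
  have hpass' : ∀ T, 0 ≤ ∑ t ∈ range T, q t ⬝ᵥ (𝒞 *ᵥ x t + 𝒟 *ᵥ q t) := fun T =>
    T.eq_zero_or_pos.elim (fun hT => by simp [hT]) (hpass T)
  have henergy := energy_bound_of_dissipation_of_passive hkmX hkpX hdis hdyn hpass'
  have hsum_le : ∀ T, ∑ t ∈ range T, x t ⬝ᵥ x t ≤ kp * (x 0 ⬝ᵥ x 0) / ε := fun T => by
    rw [le_div_iff₀' hε]
    linarith [henergy T, mul_nonneg hkm.le (dotProduct_self_nonneg (x T))]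
  have hsummable : Summable fun t => x t ⬝ᵥ x t :=
    summable_of_sum_range_le (fun t => dotProduct_self_nonneg (x t)) hsum_le
  refine ⟨fun T _ => henergy T, fun T _ => ?_, ?_⟩
  · exact sqrt_le_sqrt_div_mul_sqrt hkm (dotProduct_self_nonneg (x 0))
      (le_of_add_le_of_nonneg_left (henergy T)
        (mul_nonneg hε.le (sum_nonneg fun t _ => dotProduct_self_nonneg (x t))))
  · exact tendsto_zero_of_tendsto_dotProduct_self hsummable.tendsto_atTop_zero

theorem dissipation_implies_stability
    (n m : ℕ) (ε : ℝ) (hε : 0 < ε)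
    (X : Matrix (Fin n) (Fin n) ℝ) (hX : X.PosDef)
    (𝒜 : Matrix (Fin n) (Fin n) ℝ) (ℬ : Matrix (Fin n) (Fin m) ℝ)
    (𝒞 : Matrix (Fin m) (Fin n) ℝ) (𝒟 : Matrix (Fin m) (Fin m) ℝ)
    (km kp : ℝ) (hkm : 0 < km)
    (hkmX : ∀ v : Fin n → ℝ, km * (v ⬝ᵥ v) ≤ v ⬝ᵥ (X *ᵥ v))
    (hkpX : ∀ v : Fin n → ℝ, v ⬝ᵥ (X *ᵥ v) ≤ kp * (v ⬝ᵥ v))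
    (hdis : ∀ (v : Fin n → ℝ) (u : Fin m → ℝ),
      (𝒜 *ᵥ v + ℬ *ᵥ u) ⬝ᵥ (X *ᵥ (𝒜 *ᵥ v + ℬ *ᵥ u)) - v ⬝ᵥ (X *ᵥ v) +
        2 * (u ⬝ᵥ (𝒞 *ᵥ v + 𝒟 *ᵥ u)) + ε * (v ⬝ᵥ v) ≤ 0)
    (x : ℕ → Fin n → ℝ) (q : ℕ → Fin m → ℝ)
    (hdyn : ∀ t, x (t + 1) = 𝒜 *ᵥ x t + ℬ *ᵥ q t)
    (hpass : ∀ T : ℕ, 1 ≤ T →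
      0 ≤ ∑ t ∈ Finset.range T, q t ⬝ᵥ (𝒞 *ᵥ x t + 𝒟 *ᵥ q t)) :
    (∀ T : ℕ, 1 ≤ T →
      km * (x T ⬝ᵥ x T) + ε * ∑ t ∈ Finset.range T, x t ⬝ᵥ x t ≤
        kp * (x 0 ⬝ᵥ x 0)) ∧
    (∀ T : ℕ, 1 ≤ T →
      Real.sqrt (x T ⬝ᵥ x T) ≤ Real.sqrt (kp / km) * Real.sqrt (x 0 ⬝ᵥ x 0)) ∧
    Filter.Tendsto x Filter.atTop (nhds 0) :=
  dissipation_implies_stability_general n m ε hε X 𝒜 ℬ 𝒞 𝒟 km kp hkm hkmX hkpX hdis x q hdyn hpass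
end
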